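/- Suppose δ > 0 and 3 ≤ L < (64δ)^{−1/2}. Then P(χ(Γ) = 0) > 0. -/

import Mathlib

open scoped Classical

noncomputable section

/-- `α(C)`: the smallest element of a cluster. -/
def clAlpha (c : Finset ℕ) : ℕ := sInf (↑c : Set ℕ)

/-- `ω(C)`: the largest element of a cluster. -/
def clOmega (c : Finset ℕ) : ℕ := sSup (↑c : Set ℕ)

/-- Euclidean distance between two finite subsets of `ℤ₊`. -/
def clDist (a b : Finset ℕ) : ℕ :=
  sInf {d : ℕ | ∃ x ∈ a, ∃ y ∈ b, d = max x y - min x y}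

/-- A maximal `(k+1)`-run among a family `F` of clusters: at least two consecutive members
of `F`, successive ones at Euclidean distance `< L^(k+1)`, maximal in the sense that the
member of `F` immediately preceding (resp. following) the run, if any, is at distance
`≥ L^(k+1)`. -/
structure MaxRun (L k : ℕ) (F : Set (Finset ℕ)) where
  n : ℕ
  c : ℕ → Finset ℕ
  two_le : 2 ≤ n
  mem : ∀ i, i < n → c i ∈ F
  ordered : ∀ i, i + 1 < n → clOmega (c i) < clAlpha (c (i + 1))
  consecutive : ∀ i, i + 1 < n → ∀ b ∈ F,
    ¬(clOmega (c i) < clAlpha b ∧ clOmega b < clAlpha (c (i + 1)))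
  close : ∀ i, i + 1 < n → clDist (c i) (c (i + 1)) < L ^ (k + 1)
  max_below : ∀ b ∈ F, clOmega b < clAlpha (c 0) →
    (∀ b' ∈ F, ¬(clOmega b < clAlpha b' ∧ clOmega b' < clAlpha (c 0))) →
    L ^ (k + 1) ≤ clDist b (c 0)
  max_above : ∀ b ∈ F, clOmega (c (n - 1)) < clAlpha b →
    (∀ b' ∈ F, ¬(clOmega (c (n - 1)) < clAlpha b' ∧ clOmega b' < clAlpha b)) →
    L ^ (k + 1) ≤ clDist (c (n - 1)) b

/-- The span of a run: the smallest integer interval containing all of its constituents. -/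
def MaxRun.spanIcc {L k : ℕ} {F : Set (Finset ℕ)} (R : MaxRun L k F) : Finset ℕ :=
  Finset.Icc (clAlpha (R.c 0)) (clOmega (R.c (R.n - 1)))

/-- The cluster of level `k+1` produced by a maximal `(k+1)`-run: `span(run) ∩ Γ`. -/
def MaxRun.cluster {L k : ℕ} {F : Set (Finset ℕ)} (Γ : Set ℕ) (R : MaxRun L k F) : Finset ℕ :=
  R.spanIcc.filter (fun x => x ∈ Γ)

/-- The mass of the cluster produced by a run with constituent masses `m₁, …, m_n`:
`m₁ + ∑_{s=2}^n (m_s − k)`. -/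
def MaxRun.newMass {L k : ℕ} {F : Set (Finset ℕ)} (mass : Finset ℕ → ℕ) (R : MaxRun L k F) : ℕ :=
  mass (R.c 0) + ∑ i ∈ Finset.Ico 1 R.n, (mass (R.c i) - k)

/-- The recursive cluster hierarchy over the environment `Γ ⊆ ℤ₊` with parameter `L`:
`C 0` is the partition of `Γ` into singletons of mass one; `C (k+1)` consists of the
clusters produced by the maximal `(k+1)`-runs of clusters of `C k` of mass at least `k+1`,
together with the clusters of `C k` disjoint from the spans of all such runs. -/
structure ClusterHierarchy (L : ℕ) (Γ : Set ℕ) where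
  C : ℕ → Set (Finset ℕ)
  mass : Finset ℕ → ℕ
  C_zero : C 0 = {s | ∃ x ∈ Γ, s = {x}}
  mass_zero : ∀ x ∈ Γ, mass ({x} : Finset ℕ) = 1
  mem_succ : ∀ k c, c ∈ C (k + 1) ↔
    ((∃ R : MaxRun L k {b | b ∈ C k ∧ k + 1 ≤ mass b}, c = R.cluster Γ) ∨
     (c ∈ C k ∧ ∀ R : MaxRun L k {b | b ∈ C k ∧ k + 1 ≤ mass b},
        ∀ x ∈ c, x ∉ R.spanIcc))
  mass_succ : ∀ k (R : MaxRun L k {b | b ∈ C k ∧ k + 1 ≤ mass b}),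
    mass (R.cluster Γ) = R.newMass mass

namespace ClusterHierarchy

variable {L : ℕ} {Γ : Set ℕ}

/-- `c` is a cluster of the hierarchy. -/
def IsCluster (H : ClusterHierarchy L Γ) (c : Finset ℕ) : Prop := ∃ k, c ∈ H.C k

/-- The level `ℓ(C)` of a cluster: the smallest `k` with `C ∈ C_k`. -/
def level (H : ClusterHierarchy L Γ) (c : Finset ℕ) : ℕ := sInf {k | c ∈ H.C k}

/-- The set of levels of clusters containing `x`; `κ(x)` is its supremum. -/
def kappaSet (H : ClusterHierarchy L Γ) (x : ℕ) : Set ℕ :=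
  {ℓ | ∃ c, H.IsCluster c ∧ H.level c = ℓ ∧ x ∈ c}

/-- The limiting partition `C_∞`: the maximal clusters, i.e. clusters which are not met
by any cluster of strictly larger level. -/
def Cinf (H : ClusterHierarchy L Γ) : Set (Finset ℕ) :=
  {c | H.IsCluster c ∧
    ∀ c', H.IsCluster c' → (∃ x, x ∈ c ∧ x ∈ c') → H.level c' ≤ H.level c}

end ClusterHierarchy

end

open MeasureTheory ProbabilityTheory

open scoped ENNReal

/-!
Every cluster `C` of mass `m` is spanned by a chain of points of `Γ` from `α(C)` to `ω(C)` whose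
jumps have lengths `≤ L ^ (j + 1)`, each charged `j`, with total charge at most
`#points - m`: a run glues the chains of its constituents by jumps of level `k`, and the new
mass `m₁ + Σ (m_s - k)` pays exactly for them. Hence `χ(Γ) > 0` forces an admissible chain
of some mass `m` starting below `L ^ m` to lie in `Γ`. A chain of `n + 1` points lies in `Γ`
with probability `δ ^ (n + 1)`; dominating the admissibility indicator by
`(2L) ^ (n + 1 - m - Σ j)` makes the union bound factorize over the steps, each contributing
`2Lδ · Σ_j L ^ (j + 1) (2L) ^ (-j) = 4L²δ ≤ 1/2`, so the bad event has probability
at most `8Lδ < 1`.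
-/

def chainPts : ℕ → List (ℕ × ℕ) → List ℕ
  | a, [] => [a]
  | a, s :: l => a :: chainPts (a + s.2 + 1) l

def chainEnd (a : ℕ) (l : List (ℕ × ℕ)) : ℕ := a + (l.map fun s => s.2 + 1).sum

lemma chainEnd_cons (a : ℕ) (s : ℕ × ℕ) (l : List (ℕ × ℕ)) :
    chainEnd a (s :: l) = chainEnd (a + s.2 + 1) l := by
  simp only [chainEnd, List.map_cons, List.sum_cons]; omega

lemma chainEnd_append (a : ℕ) (l₁ : List (ℕ × ℕ)) (s : ℕ × ℕ) (l₂ : List (ℕ × ℕ)) :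
    chainEnd a (l₁ ++ s :: l₂) = chainEnd (chainEnd a l₁ + s.2 + 1) l₂ := by
  simp only [chainEnd, List.map_append, List.map_cons, List.sum_append, List.sum_cons]; omega

lemma chainPts_append (a : ℕ) (l₁ : List (ℕ × ℕ)) (s : ℕ × ℕ) (l₂ : List (ℕ × ℕ)) :
    chainPts a (l₁ ++ s :: l₂) = chainPts a l₁ ++ chainPts (chainEnd a l₁ + s.2 + 1) l₂ := by
  induction l₁ generalizing a with
  | nil => rfl
  | cons t l₁ ih => simp [chainPts, ih, chainEnd_cons]

lemma start_mem_chainPts (a : ℕ) (l : List (ℕ × ℕ)) : a ∈ chainPts a l := by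
  cases l <;> simp [chainPts]

lemma chainEnd_mem_chainPts (a : ℕ) (l : List (ℕ × ℕ)) : chainEnd a l ∈ chainPts a l := by
  induction l generalizing a with
  | nil => simp [chainPts, chainEnd]
  | cons s l ih => simpa [chainPts, chainEnd_cons] using Or.inr (ih _)

lemma le_of_mem_chainPts {a x : ℕ} {l : List (ℕ × ℕ)} (hx : x ∈ chainPts a l) : a ≤ x := by
  induction l generalizing a with
  | nil => simp_all [chainPts]
  | cons s l ih =>
    rcases List.mem_cons.1 hx with rfl | hx
    · rfl
    · have := ih hx; omega

lemma chainPts_nodup (a : ℕ) (l : List (ℕ × ℕ)) : (chainPts a l).Nodup := by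
  induction l generalizing a with
  | nil => simp [chainPts]
  | cons s l ih =>
    refine List.nodup_cons.2 ⟨fun ha => ?_, ih _⟩
    have := le_of_mem_chainPts ha; omega

lemma length_chainPts (a : ℕ) (l : List (ℕ × ℕ)) : (chainPts a l).length = l.length + 1 := by
  induction l generalizing a with
  | nil => rfl
  | cons s l ih => simp [chainPts, ih]

/-- A step `(j, h)` of a chain jumps by `h + 1`, is allowed if `h + 1 ≤ L ^ (j + 1)`, and is
charged `j`. -/
def Admissible (L m : ℕ) (l : List (ℕ × ℕ)) : Prop :=
  (∀ s ∈ l, s.2 < L ^ (s.1 + 1)) ∧ m + (l.map Prod.fst).sum ≤ l.length + 1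

def MassChain (L : ℕ) (Γ : Set ℕ) (m a b : ℕ) : Prop :=
  ∃ l, Admissible L m l ∧ (∀ x ∈ chainPts a l, x ∈ Γ) ∧ chainEnd a l = b

namespace MassChain

variable {L : ℕ} {Γ : Set ℕ}

lemma singleton {x : ℕ} (hx : x ∈ Γ) : MassChain L Γ 1 x x :=
  ⟨[], ⟨by simp, by simp⟩, by simpa [chainPts] using hx, by simp [chainEnd]⟩

lemma start_mem {m a b : ℕ} (h : MassChain L Γ m a b) : a ∈ Γ := by
  obtain ⟨l, -, hΓ, -⟩ := h
  exact hΓ a (start_mem_chainPts a l)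

lemma end_mem {m a b : ℕ} (h : MassChain L Γ m a b) : b ∈ Γ := by
  obtain ⟨l, -, hΓ, rfl⟩ := h
  exact hΓ _ (chainEnd_mem_chainPts a l)

lemma start_le_end {m a b : ℕ} (h : MassChain L Γ m a b) : a ≤ b := by
  obtain ⟨l, -, -, rfl⟩ := h
  exact Nat.le_add_right _ _

lemma glue {k m₁ a₁ b₁ m₂ a₂ b₂ : ℕ} (h₁ : MassChain L Γ m₁ a₁ b₁)
    (h₂ : MassChain L Γ m₂ a₂ b₂) (hlt : b₁ < a₂) (hgap : a₂ ≤ b₁ + L ^ (k + 1))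
    (hm₂ : k + 1 ≤ m₂) : MassChain L Γ (m₁ + (m₂ - k)) a₁ b₂ := by
  obtain ⟨l₁, ⟨hs₁, hc₁⟩, hΓ₁, rfl⟩ := h₁
  obtain ⟨l₂, ⟨hs₂, hc₂⟩, hΓ₂, rfl⟩ := h₂
  have hjoin : chainEnd a₁ l₁ + (a₂ - chainEnd a₁ l₁ - 1) + 1 = a₂ := by omega
  refine ⟨l₁ ++ (k, a₂ - chainEnd a₁ l₁ - 1) :: l₂, ⟨?_, ?_⟩, ?_, ?_⟩
  · simp only [List.mem_append, List.mem_cons]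
    rintro s (hs | rfl | hs)
    · exact hs₁ s hs
    · dsimp only; omega
    · exact hs₂ s hs
  · simp only [List.map_append, List.map_cons, List.sum_append, List.sum_cons,
      List.length_append, List.length_cons]
    omega
  · rw [chainPts_append, hjoin]
    simp only [List.mem_append]
    rintro x (hx | hx)
    exacts [hΓ₁ x hx, hΓ₂ x hx]
  · rw [chainEnd_append, hjoin]

end MassChain

lemma clAlpha_eq {c : Finset ℕ} {a : ℕ} (h : IsLeast (c : Set ℕ) a) : clAlpha c = a :=
  h.csInf_eq

lemma clOmega_eq {c : Finset ℕ} {b : ℕ} (h : IsGreatest (c : Set ℕ) b) : clOmega c = b :=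
  h.csSup_eq

lemma clAlpha_le {c : Finset ℕ} {x : ℕ} (hx : x ∈ c) : clAlpha c ≤ x :=
  csInf_le (OrderBot.bddBelow _) hx

lemma le_clOmega {c : Finset ℕ} {x : ℕ} (hx : x ∈ c) : x ≤ clOmega c :=
  le_csSup c.finite_toSet.bddAbove hx

lemma le_clDist {a b : Finset ℕ} (ha : a.Nonempty) (hb : b.Nonempty) {t : ℕ}
    (h : ∀ x ∈ a, ∀ y ∈ b, t ≤ max x y - min x y) : t ≤ clDist a b := by
  obtain ⟨x, hx⟩ := ha
  obtain ⟨y, hy⟩ := hb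
  exact le_csInf ⟨_, x, hx, y, hy, rfl⟩ (by rintro _ ⟨x, hx, y, hy, rfl⟩; exact h x hx y hy)

lemma sub_le_clDist {a b : Finset ℕ} (ha : a.Nonempty) (hb : b.Nonempty)
    (h : clOmega a < clAlpha b) : clAlpha b - clOmega a ≤ clDist a b := by
  refine le_clDist ha hb fun x hx y hy => ?_
  have := le_clOmega hx
  have := clAlpha_le hy
  omega

lemma clAlpha_le_clDist_zero {c : Finset ℕ} (hc : c.Nonempty) : clAlpha c ≤ clDist c {0} :=
  le_clDist hc (Finset.singleton_nonempty 0) fun x hx y hy => by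
    rw [Finset.mem_singleton.1 hy]
    simpa using clAlpha_le hx

namespace MaxRun

variable {L k : ℕ} {F : Set (Finset ℕ)} (R : MaxRun L k F)

lemma isLeast_cluster {Γ : Set ℕ} (ha : clAlpha (R.c 0) ∈ Γ)
    (hab : clAlpha (R.c 0) ≤ clOmega (R.c (R.n - 1))) :
    IsLeast (R.cluster Γ : Set ℕ) (clAlpha (R.c 0)) := by
  simp only [IsLeast, lowerBounds, cluster, spanIcc, Finset.coe_filter, Finset.mem_Icc]
  exact ⟨⟨⟨le_rfl, hab⟩, ha⟩, fun x hx => hx.1.1⟩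

lemma isGreatest_cluster {Γ : Set ℕ} (hb : clOmega (R.c (R.n - 1)) ∈ Γ)
    (hab : clAlpha (R.c 0) ≤ clOmega (R.c (R.n - 1))) :
    IsGreatest (R.cluster Γ : Set ℕ) (clOmega (R.c (R.n - 1))) := by
  simp only [IsGreatest, upperBounds, cluster, spanIcc, Finset.coe_filter, Finset.mem_Icc]
  exact ⟨⟨⟨hab, le_rfl⟩, hb⟩, fun x hx => hx.1.2⟩

lemma massChain {Γ : Set ℕ} (mass : Finset ℕ → ℕ)
    (hF : ∀ c ∈ F, k + 1 ≤ mass c ∧ c.Nonempty ∧ MassChain L Γ (mass c) (clAlpha c) (clOmega c)) :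
    MassChain L Γ (R.newMass mass) (clAlpha (R.c 0)) (clOmega (R.c (R.n - 1))) := by
  have hprefix : ∀ s < R.n, MassChain L Γ
      (mass (R.c 0) + ∑ i ∈ Finset.Ico 1 (s + 1), (mass (R.c i) - k))
      (clAlpha (R.c 0)) (clOmega (R.c s)) := by
    intro s hs
    induction s with
    | zero => simpa using (hF _ (R.mem 0 hs)).2.2
    | succ s ih =>
      obtain ⟨hm, hne, hchain⟩ := hF _ (R.mem (s + 1) hs)
      have hord := R.ordered s hs
      have hgap := (sub_le_clDist (hF _ (R.mem s (by omega))).2.1 hne hord).trans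
        (R.close s hs).le
      rw [Finset.sum_Ico_succ_top (by omega), ← add_assoc]
      exact (ih (by omega)).glue hchain hord (by omega) hm
  have := hprefix (R.n - 1) (by have := R.two_le; omega)
  rwa [Nat.sub_add_cancel (by have := R.two_le; omega)] at this

end MaxRun

namespace ClusterHierarchy

variable {L : ℕ} {Γ : Set ℕ} (H : ClusterHierarchy L Γ)

lemma massChain_of_mem {k : ℕ} {c : Finset ℕ} (hc : c ∈ H.C k) :
    c.Nonempty ∧ MassChain L Γ (H.mass c) (clAlpha c) (clOmega c) := by
  induction k generalizing c with
  | zero =>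
    rw [H.C_zero] at hc
    obtain ⟨x, hx, rfl⟩ := hc
    rw [H.mass_zero x hx, clAlpha_eq (a := x) (by simp [isLeast_singleton]),
      clOmega_eq (b := x) (by simp [isGreatest_singleton])]
    exact ⟨Finset.singleton_nonempty x, .singleton hx⟩
  | succ k ih =>
    rcases (H.mem_succ k c).1 hc with ⟨R, rfl⟩ | ⟨hc, -⟩
    · have hR := R.massChain H.mass fun b hb => ⟨hb.2, ih hb.1⟩
      rw [clAlpha_eq (R.isLeast_cluster hR.start_mem hR.start_le_end),
        clOmega_eq (R.isGreatest_cluster hR.end_mem hR.start_le_end), H.mass_succ]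
      exact ⟨⟨_, (R.isLeast_cluster hR.start_mem hR.start_le_end).1⟩, hR⟩
    · exact ih hc

lemma pow_mass_le_clDist_zero
    (hΓ : ∀ m a l, a < L ^ m → Admissible L m l → ∃ x ∈ chainPts a l, x ∉ Γ)
    {c : Finset ℕ} (hc : H.IsCluster c) : L ^ H.mass c ≤ clDist c {0} := by
  obtain ⟨k, hk⟩ := hc
  obtain ⟨hne, l, hadm, hlΓ, -⟩ := H.massChain_of_mem hk
  by_contra hlt
  obtain ⟨x, hx, hxΓ⟩ :=
    hΓ _ _ l ((clAlpha_le_clDist_zero hne).trans_lt (not_le.1 hlt)) hadm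
  exact hxΓ (hlΓ x hx)

end ClusterHierarchy

namespace ENNReal

lemma tsum_fin_pi_prod {β : Type*} (w : β → ℝ≥0∞) (n : ℕ) :
    ∑' f : Fin n → β, ∏ i, w (f i) = (∑' b, w b) ^ n := by
  induction n with
  | zero => simp
  | succ n ih =>
    rw [← (Fin.consEquiv fun _ => β).tsum_eq, ENNReal.tsum_prod', pow_succ', ← ih,
      ← ENNReal.tsum_mul_right]
    refine tsum_congr fun b => ?_
    rw [← ENNReal.tsum_mul_left]
    exact tsum_congr fun f => by simp [Fin.consEquiv, Fin.prod_univ_succ]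

lemma tsum_list_prod_map {β : Type*} (w : β → ℝ≥0∞) :
    ∑' l : List β, (l.map w).prod = ∑' n : ℕ, (∑' b, w b) ^ n := by
  rw [← List.equivSigmaTuple.symm.tsum_eq, ENNReal.tsum_sigma']
  refine tsum_congr fun n => ?_
  rw [← tsum_fin_pi_prod]
  exact tsum_congr fun f => by simp [List.equivSigmaTuple, List.prod_ofFn]

lemma tsum_ite_lt (N : ℕ) (z : ℝ≥0∞) : ∑' h : ℕ, (if h < N then z else 0) = N * z := by
  rw [tsum_eq_sum (s := Finset.range N) fun h hh => if_neg (by simpa using hh),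
    Finset.sum_congr rfl fun h hh => if_pos (Finset.mem_range.1 hh)]
  simp

lemma tsum_inv_two_pow : ∑' n : ℕ, (2⁻¹ : ℝ≥0∞) ^ n = 2 := by
  rw [ENNReal.tsum_geometric, ENNReal.one_sub_inv_two, inv_inv]

lemma natCast_mul_inv_two_mul {L : ℕ} (hL : L ≠ 0) : (L : ℝ≥0∞) * (2 * (L : ℝ≥0∞))⁻¹ = 2⁻¹ := by
  rw [ENNReal.mul_inv (by simp) (by simp), mul_left_comm,
    ENNReal.mul_inv_cancel (by simpa using hL) (by simp), mul_one]

end ENNReal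

noncomputable def stepWeight (L : ℕ) (p : ℝ≥0∞) (s : ℕ × ℕ) : ℝ≥0∞ :=
  if s.2 < L ^ (s.1 + 1) then 2 * L * p * (2 * (L : ℝ≥0∞))⁻¹ ^ s.1 else 0

section Counting

variable {L : ℕ} (p : ℝ≥0∞)

lemma tsum_stepWeight (hL : L ≠ 0) : ∑' s, stepWeight L p s = (2 * (L : ℝ≥0∞)) ^ 2 * p := by
  calc ∑' s, stepWeight L p s
      = ∑' j : ℕ, (L : ℝ≥0∞) ^ (j + 1) * (2 * L * p * (2 * (L : ℝ≥0∞))⁻¹ ^ j) := by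
        rw [ENNReal.tsum_prod']
        refine tsum_congr fun j => ?_
        simp only [stepWeight]
        rw [ENNReal.tsum_ite_lt, Nat.cast_pow]
    _ = 2 * L * p * L * ∑' j : ℕ, (2⁻¹ : ℝ≥0∞) ^ j := by
        rw [← ENNReal.tsum_mul_left, ← ENNReal.natCast_mul_inv_two_mul hL]
        refine tsum_congr fun j => ?_
        ring
    _ = (2 * (L : ℝ≥0∞)) ^ 2 * p := by
        rw [ENNReal.tsum_inv_two_pow]
        ring

lemma prod_map_stepWeight {l : List (ℕ × ℕ)} (hl : ∀ s ∈ l, s.2 < L ^ (s.1 + 1)) :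
    (l.map (stepWeight L p)).prod
      = (2 * L * p) ^ l.length * (2 * (L : ℝ≥0∞))⁻¹ ^ (l.map Prod.fst).sum := by
  induction l with
  | nil => simp
  | cons s l ih =>
    simp only [List.forall_mem_cons] at hl
    rw [List.map_cons, List.prod_cons, ih hl.2, stepWeight, if_pos hl.1, List.length_cons,
      List.map_cons, List.sum_cons, pow_succ, pow_add]
    ring

lemma ite_admissible_le (hL : L ≠ 0) (m : ℕ) (l : List (ℕ × ℕ)) :
    (if Admissible L m l then p ^ (l.length + 1) else 0)
      ≤ 2 * L * p * (2 * (L : ℝ≥0∞))⁻¹ ^ m * (l.map (stepWeight L p)).prod := by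
  split_ifs with hadm
  · rw [prod_map_stepWeight p hadm.1]
    have hcancel : (2 * (L : ℝ≥0∞)) * (2 * (L : ℝ≥0∞))⁻¹ = 1 :=
      ENNReal.mul_inv_cancel (by simpa using hL) (ENNReal.mul_ne_top (by simp) (by simp))
    calc p ^ (l.length + 1)
        = (2 * L * p) ^ (l.length + 1) * (2 * (L : ℝ≥0∞))⁻¹ ^ (l.length + 1) := by
          rw [← mul_pow, mul_right_comm, hcancel, one_mul]
      _ ≤ (2 * L * p) ^ (l.length + 1) * (2 * (L : ℝ≥0∞))⁻¹ ^ (m + (l.map Prod.fst).sum) := by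
          have hle : (2 * (L : ℝ≥0∞))⁻¹ ≤ 1 := ENNReal.inv_le_one.2 (by norm_cast; omega)
          exact mul_le_mul_right (pow_le_pow_right_of_le_one' hle hadm.2) _
      _ = _ := by ring
  · exact zero_le

lemma tsum_admissible_le (hL : L ≠ 0) (hp : (2 * (L : ℝ≥0∞)) ^ 2 * p ≤ 2⁻¹) (m : ℕ) :
    ∑' l, (if Admissible L m l then p ^ (l.length + 1) else 0)
      ≤ 4 * L * p * (2 * (L : ℝ≥0∞))⁻¹ ^ m := by
  calc ∑' l, (if Admissible L m l then p ^ (l.length + 1) else 0)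
      ≤ ∑' l, 2 * L * p * (2 * (L : ℝ≥0∞))⁻¹ ^ m * (l.map (stepWeight L p)).prod :=
        ENNReal.tsum_le_tsum (ite_admissible_le p hL m)
    _ = 2 * L * p * (2 * (L : ℝ≥0∞))⁻¹ ^ m * ∑' n : ℕ, ((2 * (L : ℝ≥0∞)) ^ 2 * p) ^ n := by
        rw [ENNReal.tsum_mul_left, ENNReal.tsum_list_prod_map, tsum_stepWeight p hL]
    _ ≤ 2 * L * p * (2 * (L : ℝ≥0∞))⁻¹ ^ m * ∑' n : ℕ, (2⁻¹ : ℝ≥0∞) ^ n := by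
        gcongr
    _ = 4 * L * p * (2 * (L : ℝ≥0∞))⁻¹ ^ m := by
        rw [ENNReal.tsum_inv_two_pow]
        ring

end Counting

section Bernoulli

variable {Ω : Type*} {ξ : ℕ → Ω → Bool}

def chainEvent (ξ : ℕ → Ω → Bool) (a : ℕ) (l : List (ℕ × ℕ)) : Set Ω :=
  {ω | ∀ x ∈ chainPts a l, ξ x ω = true}

def badEvent (L : ℕ) (ξ : ℕ → Ω → Bool) : Set Ω :=
  ⋃ (m : ℕ) (a : ℕ) (l : List (ℕ × ℕ)) (_ : a < L ^ m ∧ Admissible L m l), chainEvent ξ a l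

lemma exists_notMem_of_notMem_badEvent {L : ℕ} {ω : Ω} (hω : ω ∉ badEvent L ξ) (m a : ℕ)
    (l : List (ℕ × ℕ)) (ha : a < L ^ m) (hadm : Admissible L m l) :
    ∃ x ∈ chainPts a l, x ∉ {x | ξ x ω = true} := by
  simp only [badEvent, chainEvent, Set.mem_iUnion, not_exists] at hω
  simpa using hω m a l ⟨ha, hadm⟩

variable [MeasurableSpace Ω] (μ : Measure Ω) {p : ℝ≥0∞}

lemma measure_forall_mem_eq_true (hindep : iIndepFun ξ μ)
    (hlaw : ∀ i, μ {ω | ξ i ω = true} = p) (S : Finset ℕ) :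
    μ {ω | ∀ x ∈ S, ξ x ω = true} = p ^ S.card := by
  have hS : {ω | ∀ x ∈ S, ξ x ω = true} = ⋂ x ∈ S, ξ x ⁻¹' {true} := by
    ext; simp
  rw [hS, hindep.meas_biInter fun x _ => ⟨{true}, measurableSet_singleton _, rfl⟩]
  simp [Set.preimage, hlaw]

lemma measure_chainEvent (hindep : iIndepFun ξ μ) (hlaw : ∀ i, μ {ω | ξ i ω = true} = p)
    (a : ℕ) (l : List (ℕ × ℕ)) : μ (chainEvent ξ a l) = p ^ (l.length + 1) := by
  have h := measure_forall_mem_eq_true μ hindep hlaw (chainPts a l).toFinset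
  simp only [List.mem_toFinset, List.toFinset_card_of_nodup (chainPts_nodup a l),
    length_chainPts] at h
  exact h

lemma measure_badEvent_le (hindep : iIndepFun ξ μ) (hlaw : ∀ i, μ {ω | ξ i ω = true} = p)
    {L : ℕ} (hL : L ≠ 0) (hp : (2 * (L : ℝ≥0∞)) ^ 2 * p ≤ 2⁻¹) :
    μ (badEvent L ξ) ≤ 8 * L * p := by
  calc μ (badEvent L ξ)
      ≤ ∑' (m : ℕ) (a : ℕ) (l : List (ℕ × ℕ)),
          μ (⋃ (_ : a < L ^ m ∧ Admissible L m l), chainEvent ξ a l) :=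
        (measure_iUnion_le _).trans <| ENNReal.tsum_le_tsum fun m =>
          (measure_iUnion_le _).trans <| ENNReal.tsum_le_tsum fun a => measure_iUnion_le _
    _ ≤ ∑' (m : ℕ) (a : ℕ), if a < L ^ m then
          ∑' l, (if Admissible L m l then p ^ (l.length + 1) else 0) else 0 := by
        gcongr with m a
        split_ifs with ha
        · refine ENNReal.tsum_le_tsum fun l => ?_
          split_ifs with hadm
          · simpa [ha, hadm] using (measure_chainEvent μ hindep hlaw a l).le
          · simp [hadm]
        · simp [ha]
    _ ≤ ∑' m : ℕ, (L : ℝ≥0∞) ^ m * (4 * L * p * (2 * (L : ℝ≥0∞))⁻¹ ^ m) := by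
        gcongr with m
        rw [ENNReal.tsum_ite_lt]
        push_cast
        gcongr
        exact tsum_admissible_le p hL hp m
    _ = 4 * L * p * ∑' m : ℕ, ((L : ℝ≥0∞) * (2 * (L : ℝ≥0∞))⁻¹) ^ m := by
        rw [← ENNReal.tsum_mul_left]
        exact tsum_congr fun m => by ring
    _ = 8 * L * p := by
        rw [ENNReal.natCast_mul_inv_two_mul hL, ENNReal.tsum_inv_two_pow]
        ring

end Bernoulli

lemma mul_sq_lt_one_of_lt_inv_sqrt {x y : ℝ} (hx : 0 ≤ x) (hy : 0 ≤ y) (h : y < (√x)⁻¹) :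
    x * y ^ 2 < 1 := by
  have hs : 0 < √x := inv_pos.1 (hy.trans_lt h)
  have hys : y * √x < 1 := by simpa [hs.ne'] using mul_lt_mul_of_pos_right h hs
  nlinarith [Real.sq_sqrt hx, mul_nonneg hy hs.le]

lemma one_sub_le_measure_compl {Ω : Type*} [MeasurableSpace Ω] (μ : Measure Ω)
    [IsProbabilityMeasure μ] (s : Set Ω) : 1 - μ s ≤ μ sᶜ :=
  tsub_le_iff_left.2 (measure_univ (μ := μ) ▸ measure_univ_le_add_compl s)

theorem chi_zero_pos_prob_general (δ : ℝ) (L : ℕ) (hδ : 0 < δ) (hL3 : 3 ≤ L)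
    (hLδ : (L : ℝ) < (Real.sqrt (64 * δ))⁻¹)
    {Ω : Type} [MeasurableSpace Ω] (μ : Measure Ω) [IsProbabilityMeasure μ]
    (ξ : ℕ → Ω → Bool)
    (hindep : iIndepFun ξ μ)
    (hlaw : ∀ i, μ {ω | ξ i ω = true} = ENNReal.ofReal δ) :
    0 < μ {ω | ∀ H : ClusterHierarchy L {x | ξ x ω = true},
      ∀ c ∈ H.Cinf, L ^ H.mass c ≤ clDist c {0}} := by
  have hL : L ≠ 0 := by omega
  have hsmall := mul_sq_lt_one_of_lt_inv_sqrt (by positivity) (Nat.cast_nonneg L) hLδ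
  have hL1 : (1 : ℝ) ≤ L := by exact_mod_cast hL3.trans' (by norm_num)
  have hp : (2 * (L : ℝ≥0∞)) ^ 2 * ENNReal.ofReal δ ≤ 2⁻¹ := by
    rw [← ENNReal.ofReal_natCast, ← ENNReal.ofReal_ofNat 2, ← ENNReal.ofReal_mul zero_le_two,
      ← ENNReal.ofReal_pow (by positivity), ← ENNReal.ofReal_mul (by positivity),
      ← ENNReal.ofReal_inv_of_pos two_pos]
    exact ENNReal.ofReal_le_ofReal (by nlinarith)
  have hbad : μ (badEvent L ξ) < 1 := by
    refine (measure_badEvent_le μ hindep hlaw hL hp).trans_lt ?_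
    rw [← ENNReal.ofReal_natCast, ← ENNReal.ofReal_ofNat 8, ← ENNReal.ofReal_mul (by norm_num),
      ← ENNReal.ofReal_mul (by positivity)]
    exact ENNReal.ofReal_lt_one.2 (by nlinarith)
  refine (tsub_pos_of_lt hbad).trans_le <| (one_sub_le_measure_compl μ _).trans (measure_mono ?_)
  intro ω hω H c hc
  exact H.pow_mass_le_clDist_zero (exists_notMem_of_notMem_badEvent hω) hc.1

/-- If `δ > 0` and `3 ≤ L < (64δ)^{-1/2}`, then `P(χ(Γ) = 0) > 0`:
with positive probability every cluster `C ∈ C_∞` satisfies `d(C, 0) ≥ L^{m(C)}`. -/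
theorem chi_zero_pos_prob (δ : ℝ) (L : ℕ) (hδ : 0 < δ) (hL3 : 3 ≤ L)
    (hLδ : (L : ℝ) < (Real.sqrt (64 * δ))⁻¹)
    {Ω : Type} [MeasurableSpace Ω] (μ : Measure Ω) [IsProbabilityMeasure μ]
    (ξ : ℕ → Ω → Bool) (hmeas : ∀ i, Measurable (ξ i))
    (hindep : iIndepFun ξ μ)
    (hlaw : ∀ i, μ {ω | ξ i ω = true} = ENNReal.ofReal δ) :
    0 < μ {ω | ∀ H : ClusterHierarchy L {x | ξ x ω = true},
      ∀ c ∈ H.Cinf, L ^ H.mass c ≤ clDist c {0}} :=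
  chi_zero_pos_prob_general δ L hδ hL3 hLδ μ ξ hindep hlaw
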